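/- Let G=(V,E) be a bipartite graph whose sides are the terminal set T and the non-terminal set V∖T, with every pair of terminals k-element-connected, where k > r. Let C be a cutset of at most r vertices and V' the vertex set of a connected component of G − C containing at least r and at most 2r terminals, let C' = C ∩ T be the terminals in C (which is nonempty), and let G' = G[V' ∪ C']. Then G' contains at least r and at most 3r terminals, and every terminal in V' is at least k/r-element-connected in G' to some terminal of C'. -/

import Mathlib

/-!
Fix `k` element-disjoint paths from a terminal `t` of the component `V'` to a terminal `c ∈ C`,
and cut each one at the first vertex where it meets `C`; before that vertex it stays inside `V'`.
By pigeonhole at least `k / r` of the cut paths end at the same vertex `w ∈ C`, and since `k > r`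
at least two of them do, so `w` is a terminal: only terminals can be shared by element-disjoint
paths. These cut paths live in `G[V' ∪ C']` and remain element-disjoint.
-/

open SimpleGraph

/-- Two walks between the same pair of vertices are *element-disjoint* with respect to a
terminal set `T` if they share no edges and every common vertex is a terminal or an
endpoint. -/
def ElemDisjWalks {V : Type*} (T : Set V) {G : SimpleGraph V} {u v : V}
    (W₁ W₂ : G.Walk u v) : Prop :=
  (∀ e, e ∈ W₁.edges → e ∉ W₂.edges) ∧
  (∀ x, x ∈ W₁.support → x ∈ W₂.support → x ∈ T ∪ {u, v})

/-- There exist `k` pairwise element-disjoint `u`-`v` paths in `G`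
(with respect to the terminal set `T`). -/
def HasElemPaths {V : Type*} (G : SimpleGraph V) (T : Set V) (u v : V) (k : ℕ) : Prop :=
  ∃ P : Fin k → G.Walk u v, (∀ i, (P i).IsPath) ∧
    ∀ i j, i ≠ j → ElemDisjWalks T (P i) (P j)

/-- The element-connectivity `κ'_G(u,v)`: the maximum number of `u`-`v` paths that are
pairwise disjoint in edges and in non-terminal vertices. -/
noncomputable def elemConn {V : Type*} (G : SimpleGraph V) (T : Set V) (u v : V) : ℕ :=
  sSup {k | HasElemPaths G T u v k}

/-- The graph `G - S` obtained by deleting the vertex set `S` (kept on the same vertex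
type; deleted vertices simply become isolated). -/
def delVerts {V : Type*} (G : SimpleGraph V) (S : Set V) : SimpleGraph V :=
  SimpleGraph.fromRel (fun a b => G.Adj a b ∧ a ∉ S ∧ b ∉ S)

open Finset

section ElementConnectivity

variable {V : Type*} {G : SimpleGraph V} {T : Set V} {u v : V}

lemma HasElemPaths.mono {m n : ℕ} (h : HasElemPaths G T u v n) (hmn : m ≤ n) :
    HasElemPaths G T u v m := by
  obtain ⟨P, hP, hD⟩ := h
  exact ⟨fun i => P (Fin.castLE hmn i), fun _ => hP _,
    fun _ _ hij => hD _ _ ((Fin.castLE_injective hmn).ne hij)⟩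

lemma hasElemPaths_of_pairwise {ι : Type*} [Fintype ι] {P : ι → G.Walk u v}
    (hP : ∀ i, (P i).IsPath) (hD : Pairwise fun i j => ElemDisjWalks T (P i) (P j)) :
    HasElemPaths G T u v (Fintype.card ι) :=
  ⟨fun i => P ((Fintype.equivFin ι).symm i), fun _ => hP _,
    fun _ _ hij => hD ((Fintype.equivFin ι).symm.injective.ne hij)⟩

/-- Distinct paths leave `u` along distinct edges, hence towards distinct neighbours. -/
lemma bddAbove_setOf_hasElemPaths [Finite V] (huv : u ≠ v) :
    BddAbove {n | HasElemPaths G T u v n} := by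
  have := Fintype.ofFinite V
  refine ⟨Fintype.card V, fun n ⟨P, _, hD⟩ => ?_⟩
  have hsnd : ∀ i, s(u, (P i).snd) ∈ (P i).edges :=
    fun i => Walk.mk_start_snd_mem_edges (Walk.not_nil_of_ne huv)
  have hinj : Function.Injective fun i => (P i).snd := by
    intro i j hij
    by_contra hne
    have hij : (P i).snd = (P j).snd := hij
    exact (hD i j hne).1 _ (hsnd i) (hij ▸ hsnd j)
  simpa using Fintype.card_le_of_injective _ hinj

lemma HasElemPaths.le_elemConn [Finite V] {n : ℕ} (h : HasElemPaths G T u v n) (huv : u ≠ v) :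
    n ≤ elemConn G T u v :=
  le_csSup (bddAbove_setOf_hasElemPaths huv) h

lemma hasElemPaths_of_le_elemConn [Finite V] {n : ℕ} (huv : u ≠ v)
    (h : n ≤ elemConn G T u v) : HasElemPaths G T u v n :=
  have hzero : HasElemPaths G T u v 0 := ⟨Fin.elim0, fun i => i.elim0, fun i => i.elim0⟩
  (Nat.sSup_mem ⟨0, hzero⟩ (bddAbove_setOf_hasElemPaths huv)).mono h

lemma ElemDisjWalks.mem_of_mem_support {W₁ W₂ : G.Walk u v} (h : ElemDisjWalks T W₁ W₂)
    (hv : v ∈ T) {x : V} (h₁ : x ∈ W₁.support) (h₂ : x ∈ W₂.support) (hxu : x ≠ u) :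
    x ∈ T := by
  rcases h.2 x h₁ h₂ with hx | hx | hx
  · exact hx
  · exact absurd hx hxu
  · exact (Set.mem_singleton_iff.1 hx) ▸ hv

lemma ElemDisjWalks.of_subwalks {G' : SimpleGraph V} {w : V} {W₁ W₂ : G.Walk u v}
    {Q₁ Q₂ : G'.Walk u w} (h : ElemDisjWalks T W₁ W₂) (hv : v ∈ T)
    (he₁ : Q₁.edges ⊆ W₁.edges) (he₂ : Q₂.edges ⊆ W₂.edges)
    (hs₁ : Q₁.support ⊆ W₁.support) (hs₂ : Q₂.support ⊆ W₂.support) :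
    ElemDisjWalks T Q₁ Q₂ := by
  refine ⟨fun e h₁ h₂ => h.1 e (he₁ h₁) (he₂ h₂), fun x h₁ h₂ => ?_⟩
  by_cases hxu : x = u
  · exact Or.inr (Or.inl hxu)
  · exact Or.inl (h.mem_of_mem_support hv (hs₁ h₁) (hs₂ h₂) hxu)

lemma delVerts_adj {S : Set V} {a b : V} :
    (delVerts G S).Adj a b ↔ G.Adj a b ∧ a ∉ S ∧ b ∉ S := by
  simp only [delVerts, fromRel_adj]
  constructor
  · rintro ⟨-, h | ⟨hab, hb, ha⟩⟩
    exacts [h, ⟨hab.symm, ha, hb⟩]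
  · exact fun h => ⟨h.1.ne, Or.inl h⟩

end ElementConnectivity

namespace SimpleGraph

variable {V : Type*} {G : SimpleGraph V}

lemma Walk.exists_subwalk_until_mem {S C : Set V}
    (hS : ∀ x ∈ S, ∀ y, G.Adj x y → y ∈ S ∨ y ∈ C) {a c : V} (W : G.Walk a c)
    (ha : a ∈ S ∨ a ∈ C) (hc : c ∈ C) :
    ∃ w ∈ C, ∃ Q : G.Walk a w, Q.edges ⊆ W.edges ∧ Q.support ⊆ W.support ∧
      (W.IsPath → Q.IsPath) ∧ ∀ x ∈ Q.support, x ∈ S ∨ x = w := by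
  induction W with
  | nil => exact ⟨_, hc, .nil, by simp, by simp, fun _ => .nil, by simp⟩
  | @cons a b c hab W ih =>
    by_cases haC : a ∈ C
    · exact ⟨a, haC, .nil, by simp, by simp, fun _ => .nil, by simp⟩
    obtain ⟨w, hw, Q, he, hs, hp, hQS⟩ := ih (hS a (ha.resolve_right haC) b hab) hc
    refine ⟨w, hw, .cons hab Q, ?_, ?_, fun h => ?_, ?_⟩
    · simpa using List.cons_subset_cons _ he
    · simpa using List.cons_subset_cons _ hs
    · rw [Walk.cons_isPath_iff] at h ⊢
      exact ⟨hp h.1, fun hQ => h.2 (hs hQ)⟩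
    · simpa [Walk.support_cons, ha.resolve_right haC] using hQS

lemma Walk.edges_subset_edgeSet_delVerts_compl {S : Set V} {a b : V} (p : G.Walk a b)
    (hp : ∀ x ∈ p.support, x ∈ S) : ∀ e ∈ p.edges, e ∈ (delVerts G Sᶜ).edgeSet := by
  intro e
  induction e using Sym2.ind with
  | _ x y =>
    intro he
    exact delVerts_adj.2 ⟨p.adj_of_mem_edges he,
      not_not.2 (hp _ (p.fst_mem_support_of_mem_edges he)),
      not_not.2 (hp _ (p.snd_mem_support_of_mem_edges he))⟩

lemma ConnectedComponent.notMem_of_mem_image_supp {C : Set V}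
    {comp : (G.induce Cᶜ).ConnectedComponent} {x : V} (hx : x ∈ Subtype.val '' comp.supp) :
    x ∉ C := by
  obtain ⟨x, -, rfl⟩ := hx
  exact x.2

lemma ConnectedComponent.mem_image_supp_or_mem_of_adj {C : Set V}
    {comp : (G.induce Cᶜ).ConnectedComponent} {x y : V} (hx : x ∈ Subtype.val '' comp.supp)
    (hxy : G.Adj x y) : y ∈ Subtype.val '' comp.supp ∨ y ∈ C := by
  by_cases hy : y ∈ C
  · exact Or.inr hy
  obtain ⟨x, hx, rfl⟩ := hx
  have hxy' : (G.induce Cᶜ).Adj x ⟨y, hy⟩ := hxy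
  exact Or.inl ⟨⟨y, hy⟩, (connectedComponentMk_eq_of_adj hxy').symm.trans hx, rfl⟩

end SimpleGraph

lemma hasElemPaths_delVerts_of_subwalks {V ι : Type*} [Fintype ι] {G : SimpleGraph V}
    {T U : Set V} {u v w : V} {P : ι → G.Walk u v}
    (hD : Pairwise fun i j => ElemDisjWalks T (P i) (P j)) (hv : v ∈ T)
    (Q : ι → G.Walk u w) (hQp : ∀ i, (Q i).IsPath)
    (hQe : ∀ i, (Q i).edges ⊆ (P i).edges) (hQs : ∀ i, (Q i).support ⊆ (P i).support)
    (hQU : ∀ i, ∀ x ∈ (Q i).support, x ∈ U) :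
    HasElemPaths (delVerts G Uᶜ) T u w (Fintype.card ι) :=
  hasElemPaths_of_pairwise
    (P := fun i => (Q i).transfer _ ((Q i).edges_subset_edgeSet_delVerts_compl (hQU i)))
    (fun i => (hQp i).transfer _)
    (fun i j hij => (hD hij).of_subwalks hv
      (by simpa using hQe i) (by simpa using hQe j) (by simpa using hQs i) (by simpa using hQs j))

lemma Finset.exists_div_le_card_fiber {ι β : Type*} [Fintype ι] [DecidableEq β] {t : Finset β}
    (ht : t.Nonempty) {r : ℕ} (htr : #t ≤ r) (f : ι → β) (hf : ∀ i, f i ∈ t) :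
    ∃ y ∈ t, (Fintype.card ι : ℝ) / r ≤ #{i | f i = y} := by
  have hr : (0 : ℝ) < r := by exact_mod_cast ht.card_pos.trans_le htr
  refine exists_le_card_fiber_of_nsmul_le_card_of_maps_to (fun i _ => hf i) ht ?_
  calc #t • ((Fintype.card ι : ℝ) / r) ≤ r * ((Fintype.card ι : ℝ) / r) := by
        rw [nsmul_eq_mul]; gcongr
    _ = #(univ : Finset ι) := by rw [mul_div_cancel₀ _ hr.ne', card_univ]

theorem HasElemPaths.exists_div_le_elemConn {V : Type*} [Finite V] {G : SimpleGraph V}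
    {T S C : Set V} {k r : ℕ} {t c : V} (hk : HasElemPaths G T t c k) (hSC : ∀ x ∈ S, x ∉ C)
    (hS : ∀ x ∈ S, ∀ y, G.Adj x y → y ∈ S ∨ y ∈ C) (hCr : C.ncard ≤ r) (hrk : r < k)
    (ht : t ∈ S) (hc : c ∈ C ∩ T) :
    ∃ w ∈ C ∩ T, (k : ℝ) / r ≤ elemConn (delVerts G (S ∪ C ∩ T)ᶜ) T t w := by
  classical
  obtain ⟨P, hP, hD⟩ := hk
  choose w hwC Q hQe hQs hQp hQS using
    fun i => (P i).exists_subwalk_until_mem hS (Or.inl ht) hc.1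
  have hCf : (Set.toFinite C).toFinset.Nonempty := ⟨c, by simpa using hc.1⟩
  obtain ⟨w₀, hw₀C, hfiber⟩ := exists_div_le_card_fiber hCf (r := r)
    (by rw [← Set.ncard_eq_toFinset_card]; exact hCr) w (by simpa using hwC)
  rw [Set.Finite.mem_toFinset] at hw₀C
  rw [Fintype.card_fin] at hfiber
  have hr : (0 : ℝ) < r := by
    exact_mod_cast ((Set.ncard_pos (Set.toFinite C)).2 ⟨c, hc.1⟩).trans_le hCr
  have htw₀ : t ≠ w₀ := fun h => hSC t ht (h ▸ hw₀C)
  have hw₀T : w₀ ∈ T := by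
    have htwo : (1 : ℝ) < #{i | w i = w₀} :=
      ((one_lt_div hr).2 (by exact_mod_cast hrk)).trans_le hfiber
    obtain ⟨i, hi, j, hj, hij⟩ := one_lt_card.1 (by exact_mod_cast htwo)
    simp only [mem_filter, mem_univ, true_and] at hi hj
    exact (hD i j hij).mem_of_mem_support hc.2 (hQs i (hi ▸ (Q i).end_mem_support))
      (hQs j (hj ▸ (Q j).end_mem_support)) htw₀.symm
  have hR := hasElemPaths_delVerts_of_subwalks (U := S ∪ C ∩ T)
    (P := fun i : {i // w i = w₀} => P i)
    (fun i j hij => hD i j (Subtype.coe_injective.ne hij)) hc.2 (fun i => (Q i).copy rfl i.2)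
    (fun i => (Walk.isPath_copy _ _ _).2 (hQp i (hP i))) (fun i => by simpa using hQe i)
    (fun i => by simpa using hQs i) fun i x hx => by
      rcases hQS i x (by simpa using hx) with hxS | hxw
      · exact Or.inl hxS
      · exact Or.inr (by rw [hxw, i.2]; exact ⟨hw₀C, hw₀T⟩)
  refine ⟨w₀, ⟨hw₀C, hw₀T⟩, hfiber.trans ?_⟩
  rw [← Fintype.card_subtype]
  exact_mod_cast hR.le_elemConn htw₀

theorem component_terminals_connected_to_cut_general {V : Type*} [Fintype V]
    (G : SimpleGraph V) (T : Set V) (k r : ℕ)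
    (hconn : ∀ u ∈ T, ∀ v ∈ T, u ≠ v → k ≤ elemConn G T u v)
    (hkr : r < k)
    (C : Set V) (hCcard : C.ncard ≤ r)
    (V' : Set V)
    (hV' : ∃ comp : (G.induce Cᶜ).ConnectedComponent,
      V' = Subtype.val '' {x : ↥Cᶜ | (G.induce Cᶜ).connectedComponentMk x = comp})
    (hV'lo : r ≤ (V' ∩ T).ncard) (hV'hi : (V' ∩ T).ncard ≤ 2 * r)
    (hC' : (C ∩ T).Nonempty) :
    (r ≤ ((V' ∪ C ∩ T) ∩ T).ncard ∧ ((V' ∪ C ∩ T) ∩ T).ncard ≤ 3 * r) ∧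
    ∀ t ∈ V' ∩ T, ∃ c ∈ C ∩ T,
      (k : ℝ) / (r : ℝ) ≤ (elemConn (delVerts G ((V' ∪ C ∩ T)ᶜ)) T t c : ℝ) := by
  obtain ⟨comp, rfl⟩ := hV'
  set V' := Subtype.val '' comp.supp
  have hterm : (V' ∪ C ∩ T) ∩ T = V' ∩ T ∪ C ∩ T := by
    rw [Set.union_inter_distrib_right, Set.inter_assoc, Set.inter_self]
  refine ⟨⟨hV'lo.trans (Set.ncard_le_ncard (hterm ▸ Set.subset_union_left)), ?_⟩, ?_⟩
  · calc ((V' ∪ C ∩ T) ∩ T).ncard ≤ (V' ∩ T).ncard + (C ∩ T).ncard :=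
          hterm ▸ Set.ncard_union_le _ _
      _ ≤ 2 * r + r := add_le_add hV'hi ((Set.ncard_inter_le_ncard_left _ _).trans hCcard)
      _ = 3 * r := by ring
  rintro t ⟨ht, htT⟩
  obtain ⟨c, hc⟩ := hC'
  have htc : t ≠ c := fun h => ConnectedComponent.notMem_of_mem_image_supp ht (h ▸ hc.1)
  exact (hasElemPaths_of_le_elemConn htc (hconn t htT c hc.2 htc)).exists_div_le_elemConn
    (fun _ => ConnectedComponent.notMem_of_mem_image_supp)
    (fun _ hx _ => ConnectedComponent.mem_image_supp_or_mem_of_adj hx) hCcard hkr ht hc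

/-- Let `G` be bipartite with sides `T` (terminals) and `V \ T`, every pair of terminals
`k`-element-connected, `k > r`.  Let `C` be a cutset of at most `r` vertices, `V'` the
vertex set of a connected component of `G - C` containing between `r` and `2r`
terminals, `C' = C ∩ T` (nonempty), and `G' = G[V' ∪ C']` (realized as `delVerts G`
of the complement of `V' ∪ C'`).  Then `G'` contains between `r` and `3r` terminals,
and every terminal of `V'` is at least `k/r`-element-connected in `G'` to some terminal
of `C'`. -/
theorem component_terminals_connected_to_cut {V : Type*} [Fintype V]
    (G : SimpleGraph V) (T : Set V) (k r : ℕ)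
    (hbip : ∀ u v, G.Adj u v → (u ∈ T ↔ v ∉ T))
    (hconn : ∀ u ∈ T, ∀ v ∈ T, u ≠ v → k ≤ elemConn G T u v)
    (hkr : r < k)
    (C : Set V) (hCcard : C.ncard ≤ r) (hcut : ¬ (G.induce Cᶜ).Connected)
    (V' : Set V)
    (hV' : ∃ comp : (G.induce Cᶜ).ConnectedComponent,
      V' = Subtype.val '' {x : ↥Cᶜ | (G.induce Cᶜ).connectedComponentMk x = comp})
    (hV'lo : r ≤ (V' ∩ T).ncard) (hV'hi : (V' ∩ T).ncard ≤ 2 * r)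
    (hC' : (C ∩ T).Nonempty) :
    (r ≤ ((V' ∪ C ∩ T) ∩ T).ncard ∧ ((V' ∪ C ∩ T) ∩ T).ncard ≤ 3 * r) ∧
    ∀ t ∈ V' ∩ T, ∃ c ∈ C ∩ T,
      (k : ℝ) / (r : ℝ) ≤ (elemConn (delVerts G ((V' ∪ C ∩ T)ᶜ)) T t c : ℝ) :=
  component_terminals_connected_to_cut_general G T k r hconn hkr C hCcard V' hV' hV'lo hV'hi hC'
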